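/- Let F ∈ ℂ, k ∈ ℤ∖{0}, a ∈ ℂ∖{0}, m ∈ ℂ, and let b ∈ ℂ satisfy kb = 1. On V define linear operators 𝕃_n, 𝕀_n by 𝕃_n(v_t) = t·v_{n+t} for all t, 𝕀_n(v_t) = 0 for t ≠ −n, 𝕀_n(v_{−n}) = nF·v_0, and define the linear map φ by φ(v_t) = aᵗ·m·v_{kt}. Then for all n ∈ ℤ: φ ∘ 𝕃_n = (1/k)aⁿ·𝕃_{kn} ∘ φ and φ ∘ 𝕀_n = aⁿb·𝕀_{kn} ∘ φ; consequently (φ∘𝕃_n)(v_t) = t·a^{n+t}·m·v_{k(n+t)} for all t, (φ∘𝕀_n)(v_t) = 0 for t ≠ −n, and (φ∘𝕀_n)(v_{−n}) = nF·m·v_0. -/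

import Mathlib

/-!
Every map involved is determined by its values on the basis vectors `v t`, so each identity is a
computation on `v t`. On `φ (v t) = aᵗ m v (kt)` the operators `𝕃 (kn)` and `𝕀 (kn)` produce an
extra factor `k`, which the scalars `1/k` and `b` cancel since `kb = 1`; this also forces `k ≠ 0`,
so that `kt = -kn` exactly when `t = -n`.
-/

/-- The ℂ-vector space with basis `{v t : t ∈ ℤ}` (finitely supported functions ℤ → ℂ). -/
abbrev V : Type := ℤ →₀ ℂ

/-- The basis vector `v t`. -/
noncomputable def v (t : ℤ) : V := Finsupp.single t 1

/-- The linear operator on `V` determined by its values on the basis vectors. -/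
noncomputable def op (f : ℤ → V) : V →ₗ[ℂ] V := Finsupp.lift V ℂ ℤ f

/-- The operator `𝕃 n` of the module `U_F`: `𝕃 n (v t) = t v (n+t)` for all `t`. -/
noncomputable def Lop (n : ℤ) : V →ₗ[ℂ] V :=
  op fun t => (t : ℂ) • v (n + t)

/-- The operator `𝕀 n` of the module `U_F`:
`𝕀 n (v t) = 0` for `t ≠ -n`, `𝕀 n (v (-n)) = nF • v 0`. -/
noncomputable def Iop (F : ℂ) (n : ℤ) : V →ₗ[ℂ] V :=
  op fun t => if t = -n then ((n : ℂ) * F) • v 0 else 0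

/-- The twisting linear map `φ (v t) = aᵗ m • v (kt)`. -/
noncomputable def φmap (a m : ℂ) (k : ℤ) : V →ₗ[ℂ] V :=
  op fun t => (a ^ t * m) • v (k * t)

lemma op_v (f : ℤ → V) (t : ℤ) : op f (v t) = f t := by
  rw [op, v, Finsupp.lift_apply, Finsupp.sum_single_index (by simp), one_smul]

lemma linearMap_ext_v {f g : V →ₗ[ℂ] V} (h : ∀ t, f (v t) = g (v t)) : f = g :=
  Finsupp.lhom_ext' fun t => LinearMap.ext_ring (h t)

lemma Lop_v (n t : ℤ) : Lop n (v t) = (t : ℂ) • v (n + t) := op_v _ t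

lemma Iop_v (F : ℂ) (n t : ℤ) :
    Iop F n (v t) = if t = -n then ((n : ℂ) * F) • v 0 else 0 := op_v _ t

lemma φmap_v (a m : ℂ) (k t : ℤ) : φmap a m k (v t) = (a ^ t * m) • v (k * t) :=
  op_v _ t

section Twist

variable {a : ℂ} (m : ℂ) (k : ℤ)

lemma φmap_Lop_v (ha : a ≠ 0) (n t : ℤ) :
    φmap a m k (Lop n (v t)) = ((t : ℂ) * a ^ (n + t) * m) • v (k * (n + t)) := by
  rw [Lop_v, map_smul, φmap_v, smul_smul, zpow_add₀ ha]
  ring_nf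

lemma Lop_φmap_v (n t : ℤ) :
    Lop (k * n) (φmap a m k (v t)) = ((k : ℂ) * t * a ^ t * m) • v (k * (n + t)) := by
  rw [φmap_v, map_smul, Lop_v, smul_smul, mul_add]
  push_cast
  ring_nf

lemma φmap_Iop_v (F : ℂ) (n t : ℤ) :
    φmap a m k (Iop F n (v t)) = if t = -n then ((n : ℂ) * F * m) • v 0 else 0 := by
  rw [Iop_v]
  split_ifs
  · rw [map_smul, φmap_v, smul_smul, mul_zero, zpow_zero, one_mul, mul_assoc]
  · exact map_zero _

lemma Iop_φmap_v (hk : k ≠ 0) (F : ℂ) (n t : ℤ) :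
    Iop F (k * n) (φmap a m k (v t))
      = if t = -n then (a ^ t * m * (k * n * F)) • v 0 else 0 := by
  have hkt : k * t = -(k * n) ↔ t = -n := by
    rw [← mul_neg]
    exact mul_right_inj' hk
  rw [φmap_v, map_smul, Iop_v]
  simp only [hkt, Int.cast_mul]
  split_ifs
  · rw [smul_smul]
  · exact smul_zero _

end Twist

theorem U_F_intertwine_general (F : ℂ) (k : ℤ) (a : ℂ) (ha : a ≠ 0)
    (m b : ℂ) (hb : (k : ℂ) * b = 1) :
    (∀ n : ℤ, φmap a m k ∘ₗ Lop n
        = ((1 / (k : ℂ) * a ^ n) • Lop (k * n)) ∘ₗ φmap a m k) ∧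
    (∀ n : ℤ, φmap a m k ∘ₗ Iop F n = ((a ^ n * b) • Iop F (k * n)) ∘ₗ φmap a m k) ∧
    (∀ n t : ℤ, φmap a m k (Lop n (v t))
        = ((t : ℂ) * a ^ (n + t) * m) • v (k * (n + t))) ∧
    (∀ n t : ℤ, t ≠ -n → φmap a m k (Iop F n (v t)) = 0) ∧
    (∀ n : ℤ, φmap a m k (Iop F n (v (-n))) = ((n : ℂ) * F * m) • v 0) := by
  have hkC : (k : ℂ) ≠ 0 := left_ne_zero_of_mul_eq_one hb
  have hk : k ≠ 0 := Int.cast_ne_zero.mp hkC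
  refine ⟨fun n => linearMap_ext_v fun t => ?_, fun n => linearMap_ext_v fun t => ?_,
    φmap_Lop_v m k ha, fun n t ht => by rw [φmap_Iop_v, if_neg ht],
    fun n => by rw [φmap_Iop_v, if_pos rfl]⟩
  · rw [LinearMap.comp_apply, LinearMap.comp_apply, LinearMap.smul_apply, φmap_Lop_v m k ha,
      Lop_φmap_v, smul_smul, zpow_add₀ ha]
    congr 1
    field_simp
  · rw [LinearMap.comp_apply, LinearMap.comp_apply, LinearMap.smul_apply, φmap_Iop_v,
      Iop_φmap_v m k hk]
    split_ifs with ht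
    · subst ht
      have hinv : a ^ n * a ^ (-n) = 1 := by rw [← zpow_add₀ ha, add_neg_cancel, zpow_zero]
      rw [smul_smul]
      congr 1
      linear_combination (-(n : ℂ) * F * m * (a ^ n * a ^ (-n))) * hb - ((n : ℂ) * F * m) * hinv
    · exact (smul_zero _).symm

theorem U_F_intertwine (F : ℂ) (k : ℤ) (hk : k ≠ 0) (a : ℂ) (ha : a ≠ 0)
    (m b : ℂ) (hb : (k : ℂ) * b = 1) :
    (∀ n : ℤ, φmap a m k ∘ₗ Lop n
        = ((1 / (k : ℂ) * a ^ n) • Lop (k * n)) ∘ₗ φmap a m k) ∧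
    (∀ n : ℤ, φmap a m k ∘ₗ Iop F n = ((a ^ n * b) • Iop F (k * n)) ∘ₗ φmap a m k) ∧
    (∀ n t : ℤ, φmap a m k (Lop n (v t))
        = ((t : ℂ) * a ^ (n + t) * m) • v (k * (n + t))) ∧
    (∀ n t : ℤ, t ≠ -n → φmap a m k (Iop F n (v t)) = 0) ∧
    (∀ n : ℤ, φmap a m k (Iop F n (v (-n))) = ((n : ℂ) * F * m) • v 0) :=
  U_F_intertwine_general F k a ha m b hb
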